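/- Consider a knockout tournament with n = 2^ℓ players (ℓ ≥ 2) of equal strength and a deterministic draw: in round 1 player 2i−1 plays player 2i for i = 1,…,n/2; in each subsequent round the winners of consecutive pairs of matches of the previous round play each other; each match is won by either participant with probability 1/2, independently of all other matches; losers are eliminated. Let S_i be the number of matches won by player i. Then the score vector S = (S_1, …, S_n) is negatively associated (NA). -/

import Mathlib

/-!
Induction on `ℓ`.  A bracket with `2^(ℓ+1)` players is two independent brackets with `2^ℓ`
players and an independent fair coin deciding the final.  Independent negatively associated
vectors are jointly negatively associated, so the two vectors of half-scores together are NA.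
The final adds one to the score of the champion of the winning half, who is the only player of
its half with score `ℓ`.  For fixed half-brackets, flipping the coin raises one coordinate and
lowers another, so two increasing functions of complementary sets of coordinates change in
opposite directions and their covariance over the coin is `≤ 0`; averaging over the halves
and using their negative association gives the claim.  The uniform law of the match outcomes
is carried to that of (left bracket, right bracket, final coin) because restricting a uniformly
random function to a set of coordinates leaves it uniform.
-/

open scoped Classical
open Finset

noncomputable section

/-- Probability of the event `A` on a finite sample space with weights `w`. -/
def Pr {Ω : Type*} [Fintype Ω] (w : Ω → ℝ) (A : Ω → Prop) : ℝ :=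
  ∑ ω : Ω, if A ω then w ω else 0

/-- Expectation of `f` on a finite sample space with weights `w`. -/
def Expec {Ω : Type*} [Fintype Ω] (w : Ω → ℝ) (f : Ω → ℝ) : ℝ :=
  ∑ ω : Ω, w ω * f ω

/-- Conditional expectation of `f` given the event `A` under weights `w`. -/
def CExp {Ω : Type*} [Fintype Ω] (w : Ω → ℝ) (A : Ω → Prop) (f : Ω → ℝ) : ℝ :=
  (∑ ω : Ω, if A ω then w ω * f ω else 0) / Pr w A

/-- `[X_I | A] ≤_st [X_I | B]` : the conditional distribution of the subvector `X_I`
given the event `A` is dominated, in the usual stochastic order, by the conditional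
distribution of `X_I` given `B`; i.e. conditional expectations of every bounded
coordinatewise increasing function compare. -/
def CondSubvecStochLE {Ω : Type*} [Fintype Ω] {n : ℕ} (w : Ω → ℝ)
    (X : Ω → Fin n → ℝ) (I : Finset (Fin n)) (A B : Ω → Prop) : Prop :=
  ∀ φ : ({i : Fin n // i ∈ I} → ℝ) → ℝ, Monotone φ → (∃ C, ∀ v, |φ v| ≤ C) →
    CExp w A (fun ω => φ fun i => X ω i.1) ≤ CExp w B (fun ω => φ fun i => X ω i.1)

/-- Negative regression dependence: `[X_I | X_J = x_J] ≥_st [X_I | X_J = x_J*]`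
whenever `x_J ≤ x_J*` componentwise and both conditioning events have
positive probability. -/
def IsNRD {Ω : Type*} [Fintype Ω] {n : ℕ} (w : Ω → ℝ) (X : Ω → Fin n → ℝ) : Prop :=
  ∀ I J : Finset (Fin n), Disjoint I J → ∀ x y : Fin n → ℝ, (∀ j ∈ J, x j ≤ y j) →
    0 < Pr w (fun ω => ∀ j ∈ J, X ω j = x j) →
    0 < Pr w (fun ω => ∀ j ∈ J, X ω j = y j) →
    CondSubvecStochLE w X I (fun ω => ∀ j ∈ J, X ω j = y j)
      (fun ω => ∀ j ∈ J, X ω j = x j)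

/-- Negative left-tail dependence: `[X_I | X_J ≤ x_J] ≥_st [X_I | X_J ≤ x_J*]`
whenever `x_J ≤ x_J*` componentwise and both conditioning events have
positive probability. -/
def IsNLTD {Ω : Type*} [Fintype Ω] {n : ℕ} (w : Ω → ℝ) (X : Ω → Fin n → ℝ) : Prop :=
  ∀ I J : Finset (Fin n), Disjoint I J → ∀ x y : Fin n → ℝ, (∀ j ∈ J, x j ≤ y j) →
    0 < Pr w (fun ω => ∀ j ∈ J, X ω j ≤ x j) →
    0 < Pr w (fun ω => ∀ j ∈ J, X ω j ≤ y j) →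
    CondSubvecStochLE w X I (fun ω => ∀ j ∈ J, X ω j ≤ y j)
      (fun ω => ∀ j ∈ J, X ω j ≤ x j)

/-- Negative right-tail dependence: `[X_I | X_J > x_J] ≥_st [X_I | X_J > x_J*]`
whenever `x_J ≤ x_J*` componentwise and both conditioning events have
positive probability. -/
def IsNRTD {Ω : Type*} [Fintype Ω] {n : ℕ} (w : Ω → ℝ) (X : Ω → Fin n → ℝ) : Prop :=
  ∀ I J : Finset (Fin n), Disjoint I J → ∀ x y : Fin n → ℝ, (∀ j ∈ J, x j ≤ y j) →
    0 < Pr w (fun ω => ∀ j ∈ J, x j < X ω j) →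
    0 < Pr w (fun ω => ∀ j ∈ J, y j < X ω j) →
    CondSubvecStochLE w X I (fun ω => ∀ j ∈ J, y j < X ω j)
      (fun ω => ∀ j ∈ J, x j < X ω j)

/-- Negative association on a finite weighted sample space:
`Cov(ψ₁(X_{A₁}), ψ₂(X_{A₂})) ≤ 0` for disjoint `A₁, A₂` and bounded
coordinatewise increasing `ψ₁, ψ₂`. -/
def IsNAfin {Ω : Type*} [Fintype Ω] {n : ℕ} (w : Ω → ℝ) (X : Ω → Fin n → ℝ) : Prop :=
  ∀ A₁ A₂ : Finset (Fin n), Disjoint A₁ A₂ →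
    ∀ ψ₁ : ({i : Fin n // i ∈ A₁} → ℝ) → ℝ, ∀ ψ₂ : ({i : Fin n // i ∈ A₂} → ℝ) → ℝ,
      Monotone ψ₁ → Monotone ψ₂ → (∃ C, ∀ v, |ψ₁ v| ≤ C) → (∃ C, ∀ v, |ψ₂ v| ≤ C) →
      Expec w (fun ω => (ψ₁ fun i => X ω i.1) * (ψ₂ fun i => X ω i.1))
        ≤ Expec w (fun ω => ψ₁ fun i => X ω i.1) * Expec w (fun ω => ψ₂ fun i => X ω i.1)

/-- The uniform distribution on the permutations of `Fin n`. -/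
def unifPerm (n : ℕ) : Equiv.Perm (Fin n) → ℝ := fun _ => (Nat.factorial n : ℝ)⁻¹

/-- The random vector with the permutation distribution on `a`:
`X = (a_{σ(1)}, …, a_{σ(n)})` for a uniformly random permutation `σ`. -/
def permVec {n : ℕ} (a : Fin n → ℝ) (σ : Equiv.Perm (Fin n)) : Fin n → ℝ :=
  fun i => a (σ i)

/-- The sample space of match outcomes of a knockout tournament with `2^ℓ` players:
`ω r b` is the outcome of the match indexed `b` in round `r+1` (all matches of
round `r+1` have indices `b < 2^(ℓ-1-r)`; the remaining coordinates are unused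
padding coins). -/
abbrev TournOmega (ℓ : ℕ) := Fin ℓ → Fin (2 ^ (ℓ - 1)) → Bool

/-- The uniform distribution on match outcomes: all matches are independent fair
coin flips (players of equal strength). -/
def tournUnif (ℓ : ℕ) : TournOmega ℓ → ℝ := fun _ => (Fintype.card (TournOmega ℓ) : ℝ)⁻¹

/-- `tournWinner ℓ ω r b` is the (0-indexed) player winning the sub-tournament among
players `b·2^r, …, (b+1)·2^r - 1` after round `r`.  In round `r+1` the winner of
block `2b` of level `r` plays the winner of block `2b+1` of level `r`  (so in round 1
player `2b` plays player `2b+1`, and in each subsequent round the winners of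
consecutive pairs of matches of the previous round play each other); the outcome bit
`ω r b` decides the match. -/
def tournWinner (ℓ : ℕ) (ω : TournOmega ℓ) : ℕ → ℕ → ℕ
  | 0, b => b
  | r + 1, b =>
    if h : r < ℓ ∧ b < 2 ^ (ℓ - 1) then
      if ω ⟨r, h.1⟩ ⟨b, h.2⟩ then tournWinner ℓ ω r (2 * b)
      else tournWinner ℓ ω r (2 * b + 1)
    else 0

/-- `tournScore ℓ ω i` is the number of matches won by (0-indexed) player `i`:
the number of rounds `r ∈ {1,…,ℓ}` after which player `i` is still the winner of
its block. -/
def tournScore (ℓ : ℕ) (ω : TournOmega ℓ) : Fin (2 ^ ℓ) → ℝ := fun i =>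
  (((Finset.Icc 1 ℓ).filter fun r => tournWinner ℓ ω r (i.1 / 2 ^ r) = i.1).card : ℝ)

open Function

section Weights

variable {Ω Ω' Ω₁ Ω₂ : Type*} [Fintype Ω] [Fintype Ω'] [Fintype Ω₁] [Fintype Ω₂]

def uniformWeight (Ω : Type*) [Fintype Ω] : Ω → ℝ := fun _ => (Fintype.card Ω : ℝ)⁻¹

def prodWeight (w₁ : Ω₁ → ℝ) (w₂ : Ω₂ → ℝ) : Ω₁ × Ω₂ → ℝ := fun p => w₁ p.1 * w₂ p.2

lemma uniformWeight_nonneg (a : Ω) : 0 ≤ uniformWeight Ω a := by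
  unfold uniformWeight; positivity

lemma sum_uniformWeight [Nonempty Ω] : ∑ a, uniformWeight Ω a = 1 := by
  simp [uniformWeight]

lemma uniformWeight_prod :
    uniformWeight (Ω₁ × Ω₂) = prodWeight (uniformWeight Ω₁) (uniformWeight Ω₂) := by
  funext p
  simp [uniformWeight, prodWeight, mul_comm]

lemma expec_mono {w : Ω → ℝ} (hw : ∀ a, 0 ≤ w a) {f g : Ω → ℝ} (h : ∀ a, f a ≤ g a) :
    Expec w f ≤ Expec w g :=
  Finset.sum_le_sum fun a _ => mul_le_mul_of_nonneg_left (h a) (hw a)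

lemma expec_const {w : Ω → ℝ} (hw : ∑ a, w a = 1) (c : ℝ) : Expec w (fun _ => c) = c := by
  rw [Expec, ← Finset.sum_mul, hw, one_mul]

lemma expec_prodWeight (w₁ : Ω₁ → ℝ) (w₂ : Ω₂ → ℝ) (f : Ω₁ × Ω₂ → ℝ) :
    Expec (prodWeight w₁ w₂) f = Expec w₁ fun a => Expec w₂ fun b => f (a, b) := by
  simp only [Expec, prodWeight, Fintype.sum_prod_type, Finset.mul_sum, mul_assoc]

lemma expec_bool_mul_le {q : Bool → ℝ} (hq : ∀ c, 0 ≤ q c) (hq1 : q true + q false = 1)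
    {F G : Bool → ℝ} (h : (F true - F false) * (G true - G false) ≤ 0) :
    Expec q (fun c => F c * G c) ≤ Expec q F * Expec q G := by
  simp only [Expec, Fintype.sum_bool]
  have hvar := mul_nonneg (mul_nonneg (hq true) (hq false)) (neg_nonneg.mpr h)
  linear_combination hvar - (q true * F true * G true + q false * F false * G false) * hq1

lemma expec_uniformWeight_comp_equiv (e : Ω ≃ Ω') (f : Ω' → ℝ) :
    Expec (uniformWeight Ω) (f ∘ e) = Expec (uniformWeight Ω') f := by
  simp only [Expec, uniformWeight, Fintype.card_congr e, comp_apply]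
  exact e.sum_comp fun b => _ * f b

lemma expec_uniformWeight_comp_restrict {K K' β : Type*} [Fintype K] [Fintype K']
    [DecidableEq K] [DecidableEq K'] [Fintype β] [Nonempty β] {P : K' → K} (hP : Injective P)
    (f : (K' → β) → ℝ) :
    Expec (uniformWeight (K → β)) (fun ω => f (ω ∘ P)) = Expec (uniformWeight (K' → β)) f := by
  let split := Equiv.piEquivPiSubtypeProd (· ∈ Set.range P) fun _ => β
  let onRange : (Set.range P → β) ≃ (K' → β) :=
    (Equiv.ofInjective P hP).symm.arrowCongr (Equiv.refl β)
  calc Expec (uniformWeight (K → β)) (fun ω => f (ω ∘ P))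
      = Expec (uniformWeight _) fun p : (Set.range P → β) × ({k // k ∉ Set.range P} → β) =>
          f (onRange p.1) :=
        expec_uniformWeight_comp_equiv split fun p => f (onRange p.1)
    _ = Expec (uniformWeight (Set.range P → β)) (f ∘ onRange) := by
        rw [uniformWeight_prod, expec_prodWeight]
        simp only [expec_const sum_uniformWeight]
        rfl
    _ = Expec (uniformWeight (K' → β)) f := expec_uniformWeight_comp_equiv onRange f

end Weights

lemma Monotone.le_of_dependsOn {ι α β : Type*} [Preorder α] [Preorder β] {f : (ι → α) → β}
    (hf : Monotone f) {s : Set ι} (hs : DependsOn f s) {u v : ι → α}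
    (h : ∀ i ∈ s, u i ≤ v i) : f u ≤ f v :=
  calc f u = f (s.piecewise u v) := hs fun i hi => by simp [hi]
    _ ≤ f v := hf fun i => by by_cases hi : i ∈ s <;> simp [hi, h i]

lemma Set.Subsingleton.le_on_or_le_on_compl {ι α : Type*} [LinearOrder α] {u v : ι → α}
    (h : {i | v i < u i}.Subsingleton) (s : Set ι) :
    (∀ i ∈ s, u i ≤ v i) ∨ ∀ i ∈ sᶜ, u i ≤ v i := by
  by_contra! ⟨⟨i, hi, hvi⟩, ⟨j, hj, hvj⟩⟩
  exact hj (h hvj hvi ▸ hi)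

lemma dependsOn_expec {Ω ι α : Type*} [Fintype Ω] (w : Ω → ℝ) {F : Ω → (ι → α) → ℝ}
    {s : Set ι} (hF : ∀ a, DependsOn (F a) s) : DependsOn (fun u => Expec w fun a => F a u) s :=
  fun _ _ h => congrArg (Expec w) (funext fun a => hF a h)

lemma monotone_expec {Ω α : Type*} [Fintype Ω] [Preorder α] {w : Ω → ℝ} (hw : ∀ a, 0 ≤ w a)
    {F : Ω → α → ℝ} (hF : ∀ a, Monotone (F a)) : Monotone fun u => Expec w fun a => F a u :=
  fun _ _ h => expec_mono hw fun a => hF a h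

/-- Negative association over an arbitrary index type, with test functions on the whole vector
depending on complementary sets of coordinates (disjoint sets may always be enlarged to
complementary ones); boundedness plays no role on a finite sample space. -/
def IsNegAssoc {Ω ι : Type*} [Fintype Ω] (w : Ω → ℝ) (X : Ω → ι → ℝ) : Prop :=
  ∀ (s : Set ι) (f g : (ι → ℝ) → ℝ), Monotone f → Monotone g → DependsOn f s → DependsOn g sᶜ →
    Expec w (fun a => f (X a) * g (X a)) ≤ Expec w (fun a => f (X a)) * Expec w (fun a => g (X a))

section NegAssoc

variable {Ω Ω' Ω₁ Ω₂ ι κ : Type*} [Fintype Ω] [Fintype Ω'] [Fintype Ω₁] [Fintype Ω₂]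

lemma IsNegAssoc.isNAfin {n : ℕ} {w : Ω → ℝ} {X : Ω → Fin n → ℝ} (hX : IsNegAssoc w X) :
    IsNAfin w X := by
  intro A₁ A₂ hA ψ₁ ψ₂ hψ₁ hψ₂ _ _
  refine hX A₁ (fun u => ψ₁ fun i => u i) (fun u => ψ₂ fun i => u i)
    (fun u v h => hψ₁ fun i => h i) (fun u v h => hψ₂ fun i => h i) ?_ ?_
  · exact fun u v h => congrArg ψ₁ (funext fun i => h i i.2)
  · exact fun u v h => congrArg ψ₂ (funext fun i => h i (Finset.disjoint_right.mp hA i.2))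

lemma isNegAssoc_const {w : Ω → ℝ} (hw : ∑ a, w a = 1) (x : ι → ℝ) :
    IsNegAssoc w fun _ => x := by
  intro s f g _ _ _ _
  simp only [expec_const hw, le_refl]

lemma IsNegAssoc.comp_injective {w : Ω → ℝ} {X : Ω → ι → ℝ} (hX : IsNegAssoc w X)
    {e : κ → ι} (he : Injective e) : IsNegAssoc w fun a => X a ∘ e := by
  intro s f g hf hg hfs hgs
  refine hX (e '' s) (fun u => f (u ∘ e)) (fun u => g (u ∘ e))
    (fun u v h => hf fun k => h (e k)) (fun u v h => hg fun k => h (e k)) ?_ ?_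
  · exact fun u v h => hfs fun k hk => h _ (Set.mem_image_of_mem e hk)
  · exact fun u v h => hgs fun k hk => h _ (he.mem_set_image.not.mpr hk)

lemma IsNegAssoc.comp {w : Ω → ℝ} {w' : Ω' → ℝ} {Y : Ω' → ι → ℝ} (hY : IsNegAssoc w' Y)
    {T : Ω → Ω'} (hT : ∀ f, Expec w (f ∘ T) = Expec w' f) : IsNegAssoc w (Y ∘ T) := by
  intro s f g hf hg hfs hgs
  have := hY s f g hf hg hfs hgs
  rwa [← hT, ← hT, ← hT] at this

/-- The coordinate where `u` exceeds `v` is invisible to `f` or to `g`, and so is the one where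
it falls below `v`. -/
lemma sub_mul_sub_nonpos_of_subsingleton {s : Set ι} {f g : (ι → ℝ) → ℝ} (hf : Monotone f)
    (hg : Monotone g) (hfs : DependsOn f s) (hgs : DependsOn g sᶜ) {u v : ι → ℝ}
    (hup : {i | v i < u i}.Subsingleton) (hdown : {i | u i < v i}.Subsingleton) :
    (f u - f v) * (g u - g v) ≤ 0 := by
  rcases hup.le_on_or_le_on_compl s with h₁ | h₁ <;>
    rcases hdown.le_on_or_le_on_compl s with h₂ | h₂
  · rw [le_antisymm (hf.le_of_dependsOn hfs h₁) (hf.le_of_dependsOn hfs h₂), sub_self, zero_mul]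
  · exact mul_nonpos_of_nonpos_of_nonneg (sub_nonpos.mpr (hf.le_of_dependsOn hfs h₁))
      (sub_nonneg.mpr (hg.le_of_dependsOn hgs h₂))
  · exact mul_nonpos_of_nonneg_of_nonpos (sub_nonneg.mpr (hf.le_of_dependsOn hfs h₂))
      (sub_nonpos.mpr (hg.le_of_dependsOn hgs h₁))
  · rw [le_antisymm (hg.le_of_dependsOn hgs h₁) (hg.le_of_dependsOn hgs h₂), sub_self, mul_zero]

lemma DependsOn.comp_sumElim_left {α β : Type*} {f : (ι ⊕ κ → α) → β} {s : Set (ι ⊕ κ)}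
    (hf : DependsOn f s) (v : κ → α) : DependsOn (fun u => f (Sum.elim u v)) (Sum.inl ⁻¹' s) :=
  fun _ _ h => hf fun k hk => by cases k <;> simp_all

lemma DependsOn.comp_sumElim_right {α β : Type*} {f : (ι ⊕ κ → α) → β} {s : Set (ι ⊕ κ)}
    (hf : DependsOn f s) (u : ι → α) : DependsOn (fun v => f (Sum.elim u v)) (Sum.inr ⁻¹' s) :=
  fun _ _ h => hf fun k hk => by cases k <;> simp_all

theorem IsNegAssoc.sumElim {w₁ : Ω₁ → ℝ} {w₂ : Ω₂ → ℝ} {X₁ : Ω₁ → ι → ℝ} {X₂ : Ω₂ → κ → ℝ}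
    (hw₁ : ∀ a, 0 ≤ w₁ a) (hw₂ : ∀ b, 0 ≤ w₂ b) (h₁ : IsNegAssoc w₁ X₁)
    (h₂ : IsNegAssoc w₂ X₂) :
    IsNegAssoc (prodWeight w₁ w₂) fun p => Sum.elim (X₁ p.1) (X₂ p.2) := by
  intro s f g hf hg hfs hgs
  have hfiber : ∀ a, Expec w₂ (fun b => f (Sum.elim (X₁ a) (X₂ b)) * g (Sum.elim (X₁ a) (X₂ b)))
      ≤ Expec w₂ (fun b => f (Sum.elim (X₁ a) (X₂ b))) *
        Expec w₂ (fun b => g (Sum.elim (X₁ a) (X₂ b))) := fun a =>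
    h₂ _ _ _ (fun _ _ h => hf (Sum.elim_le_elim_iff.mpr ⟨le_rfl, h⟩))
      (fun _ _ h => hg (Sum.elim_le_elim_iff.mpr ⟨le_rfl, h⟩))
      (hfs.comp_sumElim_right (X₁ a)) (hgs.comp_sumElim_right (X₁ a))
  have hmarginal := h₁ (Sum.inl ⁻¹' s) (fun u => Expec w₂ fun b => f (Sum.elim u (X₂ b)))
    (fun u => Expec w₂ fun b => g (Sum.elim u (X₂ b)))
    (monotone_expec hw₂ fun _ _ _ h => hf (Sum.elim_le_elim_iff.mpr ⟨h, le_rfl⟩))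
    (monotone_expec hw₂ fun _ _ _ h => hg (Sum.elim_le_elim_iff.mpr ⟨h, le_rfl⟩))
    (dependsOn_expec w₂ fun b => hfs.comp_sumElim_left (X₂ b))
    (dependsOn_expec w₂ fun b => hgs.comp_sumElim_left (X₂ b))
  simp only [expec_prodWeight]
  exact (expec_mono hw₁ hfiber).trans hmarginal

theorem IsNegAssoc.prod_bool {w : Ω → ℝ} {q : Bool → ℝ} {Y : Ω → ι → ℝ}
    {φ : Bool → ι → ℝ → ℝ} (hw : ∀ a, 0 ≤ w a) (hq : ∀ c, 0 ≤ q c)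
    (hq1 : q true + q false = 1) (hφ : ∀ c i, Monotone (φ c i)) (hY : IsNegAssoc w Y)
    (hup : ∀ a, {i | φ false i (Y a i) < φ true i (Y a i)}.Subsingleton)
    (hdown : ∀ a, {i | φ true i (Y a i) < φ false i (Y a i)}.Subsingleton) :
    IsNegAssoc (prodWeight w q) fun p i => φ p.2 i (Y p.1 i) := by
  intro s f g hf hg hfs hgs
  have hmap : ∀ c, Monotone fun (u : ι → ℝ) i => φ c i (u i) := fun c _ _ h i => hφ c i (h i)
  have hloc : ∀ {t : Set ι} {F : (ι → ℝ) → ℝ}, DependsOn F t → ∀ c,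
      DependsOn (fun u => F fun i => φ c i (u i)) t :=
    fun hF c _ _ h => hF fun i hi => by rw [h i hi]
  have hfiber : ∀ a, Expec q (fun c => f (fun i => φ c i (Y a i)) * g (fun i => φ c i (Y a i)))
      ≤ Expec q (fun c => f fun i => φ c i (Y a i)) * Expec q (fun c => g fun i => φ c i (Y a i)) :=
    fun a => expec_bool_mul_le hq hq1
      (sub_mul_sub_nonpos_of_subsingleton hf hg hfs hgs (hup a) (hdown a))
  have hmarginal := hY s (fun u => Expec q fun c => f fun i => φ c i (u i))
    (fun u => Expec q fun c => g fun i => φ c i (u i))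
    (monotone_expec hq fun c => hf.comp (hmap c)) (monotone_expec hq fun c => hg.comp (hmap c))
    (dependsOn_expec q (hloc hfs)) (dependsOn_expec q (hloc hgs))
  simp only [expec_prodWeight]
  exact (expec_mono hw hfiber).trans hmarginal

end NegAssoc

namespace Tournament

def halfOffset (h : Bool) (m : ℕ) : ℕ := if h then 0 else 2 ^ m

/-- Column of match `b` of round `r + 1` of half `h` (left for `true`) inside the bracket with
`2 ^ (ℓ + 1)` players.  The real matches (`b < 2 ^ (ℓ - 1 - r)`) of the left half keep their
column and those of the right half are shifted past them; the padding coins are sent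
injectively into the columns that no real match uses. -/
def matchIndex (ℓ : ℕ) (h : Bool) (r b : ℕ) : ℕ :=
  if b < 2 ^ (ℓ - 1 - r) then b + halfOffset h (ℓ - 1 - r)
  else b + if h then 2 ^ (ℓ - 1 - r) else 2 ^ (ℓ - 1)

lemma pow_sub_one_sub_le (ℓ r : ℕ) : 2 ^ (ℓ - 1 - r) ≤ 2 ^ (ℓ - 1) :=
  Nat.pow_le_pow_right two_pos (Nat.sub_le _ _)

lemma matchIndex_lt {ℓ r b : ℕ} (h : Bool) (hr : r < ℓ) (hb : b < 2 ^ (ℓ - 1)) :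
    matchIndex ℓ h r b < 2 ^ (ℓ + 1 - 1) := by
  have hle := pow_sub_one_sub_le ℓ r
  have hℓ : 2 ^ (ℓ + 1 - 1) = 2 ^ (ℓ - 1) + 2 ^ (ℓ - 1) := by
    rw [← two_mul, ← pow_succ']; congr 1; omega
  unfold matchIndex halfOffset
  cases h <;> simp only [Bool.false_eq_true, if_true, if_false] <;> split_ifs <;> omega

lemma eq_and_eq_of_matchIndex_eq {ℓ r b b' : ℕ} {h h' : Bool} (hb : b < 2 ^ (ℓ - 1))
    (hb' : b' < 2 ^ (ℓ - 1)) (he : matchIndex ℓ h r b = matchIndex ℓ h' r b') :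
    h = h' ∧ b = b' := by
  have hle := pow_sub_one_sub_le ℓ r
  have hpos : 0 < 2 ^ (ℓ - 1 - r) := by positivity
  unfold matchIndex halfOffset at he
  cases h <;> cases h' <;> simp only [Bool.false_eq_true, if_true, if_false] at he <;>
    split_ifs at he <;> simp <;> omega

def matchPos (ℓ : ℕ) (h : Bool) (x : Fin ℓ × Fin (2 ^ (ℓ - 1))) :
    Fin (ℓ + 1) × Fin (2 ^ (ℓ + 1 - 1)) :=
  (x.1.castSucc, ⟨matchIndex ℓ h x.1 x.2, matchIndex_lt h x.1.2 x.2.2⟩)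

lemma eq_and_eq_of_matchPos_eq {ℓ : ℕ} {h h' : Bool} {x x' : Fin ℓ × Fin (2 ^ (ℓ - 1))}
    (he : matchPos ℓ h x = matchPos ℓ h' x') : h = h' ∧ x = x' := by
  obtain ⟨⟨r, b⟩, ⟨r', b'⟩⟩ := x, x'
  obtain ⟨hr, hb⟩ := Prod.mk.inj he
  obtain rfl := Fin.castSucc_injective _ hr
  obtain ⟨rfl, hbb⟩ := eq_and_eq_of_matchIndex_eq b.2 b'.2 (Fin.mk.inj hb)
  exact ⟨rfl, Prod.ext rfl (Fin.ext hbb)⟩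

def restrictHalf (ℓ : ℕ) (h : Bool) (ω : TournOmega (ℓ + 1)) : TournOmega ℓ :=
  fun r b => uncurry ω (matchPos ℓ h (r, b))

def finalCoin (ℓ : ℕ) (ω : TournOmega (ℓ + 1)) : Bool := ω (Fin.last ℓ) ⟨0, by positivity⟩

def tournSplit (ℓ : ℕ) (ω : TournOmega (ℓ + 1)) : (TournOmega ℓ × TournOmega ℓ) × Bool :=
  ((restrictHalf ℓ true ω, restrictHalf ℓ false ω), finalCoin ℓ ω)

lemma expec_tournUnif_comp_tournSplit (ℓ : ℕ) (f : (TournOmega ℓ × TournOmega ℓ) × Bool → ℝ) :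
    Expec (tournUnif (ℓ + 1)) (f ∘ tournSplit ℓ) =
      Expec (prodWeight (prodWeight (tournUnif ℓ) (tournUnif ℓ)) (uniformWeight Bool)) f := by
  let I := Fin ℓ × Fin (2 ^ (ℓ - 1))
  let P : (I ⊕ I) ⊕ Unit → Fin (ℓ + 1) × Fin (2 ^ (ℓ + 1 - 1)) :=
    Sum.elim (Sum.elim (matchPos ℓ true) (matchPos ℓ false))
      fun _ => (Fin.last ℓ, ⟨0, by positivity⟩)
  have hP : Injective P := by
    refine Injective.sumElim (Injective.sumElim (fun _ _ he => (eq_and_eq_of_matchPos_eq he).2)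
      (fun _ _ he => (eq_and_eq_of_matchPos_eq he).2)
      fun _ _ he => absurd (eq_and_eq_of_matchPos_eq he).1 (by simp))
      (injective_of_subsingleton _) ?_
    rintro (x | x) _ he <;> exact (Fin.castSucc_lt_last x.1).ne (Prod.mk.inj he).1
  let decode : ((I ⊕ I) ⊕ Unit → Bool) ≃ (TournOmega ℓ × TournOmega ℓ) × Bool :=
    (Equiv.sumArrowEquivProdArrow _ _ _).trans <| Equiv.prodCongr
      ((Equiv.sumArrowEquivProdArrow _ _ _).trans
        ((Equiv.curry _ _ _).prodCongr (Equiv.curry _ _ _))) (Equiv.funUnique Unit Bool)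
  calc Expec (tournUnif (ℓ + 1)) (f ∘ tournSplit ℓ)
      = Expec (uniformWeight (Fin (ℓ + 1) × Fin (2 ^ (ℓ + 1 - 1)) → Bool))
          (fun η => (f ∘ decode) (η ∘ P)) :=
        (expec_uniformWeight_comp_equiv (Equiv.curry _ _ _) (f ∘ tournSplit ℓ)).symm
    _ = Expec (uniformWeight ((TournOmega ℓ × TournOmega ℓ) × Bool)) f := by
        rw [expec_uniformWeight_comp_restrict hP, expec_uniformWeight_comp_equiv]
    _ = _ := by rw [uniformWeight_prod, uniformWeight_prod]; rfl

lemma tournWinner_lt {ℓ : ℕ} (ω : TournOmega ℓ) {r b : ℕ} (hr : r ≤ ℓ) (hb : b < 2 ^ (ℓ - r)) :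
    tournWinner ℓ ω r b < 2 ^ ℓ := by
  induction r generalizing b with
  | zero => simpa [tournWinner] using hb
  | succ r ih =>
    have hpow : 2 ^ (ℓ - r) = 2 * 2 ^ (ℓ - (r + 1)) := by rw [← pow_succ']; congr 1; omega
    rw [tournWinner]
    split_ifs
    · exact ih (by omega) (by omega)
    · exact ih (by omega) (by omega)
    · exact Nat.two_pow_pos ℓ

lemma tournWinner_restrictHalf (ℓ : ℕ) (h : Bool) (ω : TournOmega (ℓ + 1)) {r b : ℕ}
    (hr : r ≤ ℓ) (hb : b < 2 ^ (ℓ - r)) :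
    tournWinner (ℓ + 1) ω r (b + halfOffset h (ℓ - r)) =
      tournWinner ℓ (restrictHalf ℓ h ω) r b + halfOffset h ℓ := by
  induction r generalizing b with
  | zero => rfl
  | succ r ih =>
    have hpow : 2 ^ (ℓ - r) = 2 * 2 ^ (ℓ - (r + 1)) := by rw [← pow_succ']; congr 1; omega
    have hsub : ℓ - 1 - r = ℓ - (r + 1) := by omega
    have hle : 2 ^ (ℓ - (r + 1)) ≤ 2 ^ (ℓ - 1) := hsub ▸ pow_sub_one_sub_le ℓ r
    have hle' : 2 ^ (ℓ - r) ≤ 2 ^ ℓ := Nat.pow_le_pow_right two_pos (Nat.sub_le _ _)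
    have hoff : 2 * (b + halfOffset h (ℓ - (r + 1))) = 2 * b + halfOffset h (ℓ - r) := by
      cases h <;> simp [halfOffset]; omega
    have hbig : r < ℓ + 1 ∧ b + halfOffset h (ℓ - (r + 1)) < 2 ^ (ℓ + 1 - 1) := by
      cases h <;> simp [halfOffset] <;> omega
    have hsmall : r < ℓ ∧ b < 2 ^ (ℓ - 1) := by omega
    have hcoin : restrictHalf ℓ h ω ⟨r, hsmall.1⟩ ⟨b, hsmall.2⟩ = ω ⟨r, hbig.1⟩ ⟨_, hbig.2⟩ := by
      simp [restrictHalf, matchPos, matchIndex, hsub, hb]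
    rw [tournWinner, tournWinner, dif_pos hbig, dif_pos hsmall, hcoin]
    split
    · rw [hoff]; exact ih (by omega) (by omega)
    · rw [show 2 * (b + _) + 1 = 2 * b + 1 + halfOffset h (ℓ - r) by omega]
      exact ih (by omega) (by omega)

lemma tournWinner_final (ℓ : ℕ) (ω : TournOmega (ℓ + 1)) :
    tournWinner (ℓ + 1) ω (ℓ + 1) 0 =
      tournWinner ℓ (restrictHalf ℓ (finalCoin ℓ ω) ω) ℓ 0 + halfOffset (finalCoin ℓ ω) ℓ := by
  have hfinal : ℓ < ℓ + 1 ∧ 0 < 2 ^ (ℓ + 1 - 1) := ⟨ℓ.lt_succ_self, by positivity⟩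
  have hhalf := fun h => tournWinner_restrictHalf ℓ h ω le_rfl (b := 0) (by simp)
  have hcoin : ω ⟨ℓ, hfinal.1⟩ ⟨0, hfinal.2⟩ = finalCoin ℓ ω := rfl
  rw [tournWinner, dif_pos hfinal, hcoin]
  cases finalCoin ℓ ω
  · simpa [halfOffset] using hhalf false
  · simpa [halfOffset] using hhalf true

lemma tournWinner_final_eq_add_halfOffset_iff {ℓ k : ℕ} (hk : k < 2 ^ ℓ) (h : Bool)
    (ω : TournOmega (ℓ + 1)) :
    tournWinner (ℓ + 1) ω (ℓ + 1) 0 = k + halfOffset h ℓ ↔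
      finalCoin ℓ ω = h ∧ tournWinner ℓ (restrictHalf ℓ h ω) ℓ 0 = k := by
  have hlt := tournWinner_lt (restrictHalf ℓ (finalCoin ℓ ω) ω) le_rfl (b := 0) (by simp)
  rw [tournWinner_final]
  cases h <;> cases hc : finalCoin ℓ ω <;> simp [hc, halfOffset] at hlt ⊢ <;> omega

lemma tournScore_le {ℓ : ℕ} (ω : TournOmega ℓ) (i : Fin (2 ^ ℓ)) : tournScore ℓ ω i ≤ ℓ := by
  unfold tournScore
  exact_mod_cast (card_filter_le _ _).trans (by simp)

lemma exists_eq_add_halfOffset {ℓ : ℕ} (i : Fin (2 ^ (ℓ + 1))) :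
    ∃ (h : Bool) (k : Fin (2 ^ ℓ)), (i : ℕ) = k + halfOffset h ℓ := by
  have hi : (i : ℕ) < 2 ^ ℓ * 2 := pow_succ 2 ℓ ▸ i.2
  by_cases hlt : (i : ℕ) < 2 ^ ℓ
  · exact ⟨true, ⟨i, hlt⟩, by simp [halfOffset]⟩
  · exact ⟨false, ⟨i - 2 ^ ℓ, by omega⟩, by simp [halfOffset]; omega⟩

lemma tournScore_succ {ℓ : ℕ} (ω : TournOmega (ℓ + 1)) {h : Bool} {i : Fin (2 ^ (ℓ + 1))}
    {k : Fin (2 ^ ℓ)} (hik : (i : ℕ) = k + halfOffset h ℓ) :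
    tournScore (ℓ + 1) ω i = tournScore ℓ (restrictHalf ℓ h ω) k +
      if finalCoin ℓ ω = h ∧ tournWinner ℓ (restrictHalf ℓ h ω) ℓ 0 = k then 1 else 0 := by
  have hrounds : (Icc 1 ℓ).filter (fun r => tournWinner (ℓ + 1) ω r (i / 2 ^ r) = i) =
      (Icc 1 ℓ).filter (fun r => tournWinner ℓ (restrictHalf ℓ h ω) r (k / 2 ^ r) = k) := by
    refine filter_congr fun r hr => ?_
    have hr : r ≤ ℓ := (mem_Icc.mp hr).2
    have hpow : 2 ^ ℓ = 2 ^ (ℓ - r) * 2 ^ r := by rw [← pow_add, Nat.sub_add_cancel hr]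
    have hdiv : (i : ℕ) / 2 ^ r = k / 2 ^ r + halfOffset h (ℓ - r) := by
      cases h
      · simp only [hik, halfOffset, Bool.false_eq_true, if_false]
        have hquot : 2 ^ ℓ / 2 ^ r = 2 ^ (ℓ - r) := by
          rw [hpow, Nat.mul_div_cancel _ (by positivity)]
        rw [Nat.add_div_of_dvd_left (hpow ▸ Dvd.intro_left _ rfl), hquot]
      · simp [hik, halfOffset]
    have hblock : (k : ℕ) / 2 ^ r < 2 ^ (ℓ - r) :=
      Nat.div_lt_of_lt_mul (by rw [mul_comm, ← hpow]; exact k.2)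
    rw [hdiv, tournWinner_restrictHalf ℓ h ω hr hblock, hik, add_left_inj]
  have hfinal : tournWinner (ℓ + 1) ω (ℓ + 1) (i / 2 ^ (ℓ + 1)) = i ↔
      finalCoin ℓ ω = h ∧ tournWinner ℓ (restrictHalf ℓ h ω) ℓ 0 = k := by
    rw [Nat.div_eq_of_lt i.2, hik]
    exact tournWinner_final_eq_add_halfOffset_iff k.2 h ω
  unfold tournScore
  rw [← insert_Icc_right_eq_Icc_add_one (by omega), filter_insert, hrounds]
  by_cases hw : finalCoin ℓ ω = h ∧ tournWinner ℓ (restrictHalf ℓ h ω) ℓ 0 = k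
  · rw [if_pos (hfinal.mpr hw), card_insert_of_notMem (by simp), if_pos hw]
    push_cast; ring
  · rw [if_neg (mt hfinal.mp hw), if_neg hw, add_zero]

lemma le_tournScore_iff {ℓ : ℕ} (ω : TournOmega ℓ) (i : Fin (2 ^ ℓ)) :
    (ℓ : ℝ) ≤ tournScore ℓ ω i ↔ tournWinner ℓ ω ℓ 0 = i := by
  induction ℓ with
  | zero => simp [tournScore, tournWinner]
  | succ ℓ ih =>
    obtain ⟨h, k, hik⟩ := exists_eq_add_halfOffset i
    rw [tournScore_succ ω hik, hik, tournWinner_final_eq_add_halfOffset_iff k.2]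
    have hle := tournScore_le (restrictHalf ℓ h ω) k
    by_cases hw : finalCoin ℓ ω = h ∧ tournWinner ℓ (restrictHalf ℓ h ω) ℓ 0 = k
    · have := (ih _ k).mpr hw.2
      simp only [hw, if_true, and_self, iff_true]
      push_cast; linarith
    · simp only [hw, if_false, iff_false, not_le]
      push_cast; linarith

lemma subsingleton_le_tournScore {ℓ : ℕ} (ω : TournOmega ℓ) :
    {i | (ℓ : ℝ) ≤ tournScore ℓ ω i}.Subsingleton := fun i hi j hj =>
  Fin.ext (((le_tournScore_iff ω i).mp hi).symm.trans ((le_tournScore_iff ω j).mp hj))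

/-- A player of the winning half `c` gains a point in the final iff it won its half, i.e. iff its
score is `ℓ`; phrasing this through the score makes the update coordinatewise monotone. -/
def finalBump {α β : Type*} (ℓ : ℕ) (c : Bool) (k : α ⊕ β) (s : ℝ) : ℝ :=
  if c = k.isLeft ∧ (ℓ : ℝ) ≤ s then s + 1 else s

lemma finalBump_monotone {α β : Type*} (ℓ : ℕ) (c : Bool) (k : α ⊕ β) :
    Monotone (finalBump ℓ c k) := by
  intro s t hst
  unfold finalBump
  split_ifs with hs ht <;> first | linarith | exact absurd ⟨hs.1, hs.2.trans hst⟩ ht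

lemma finalBump_lt_finalBump {α β : Type*} {ℓ : ℕ} {c c' : Bool} {k : α ⊕ β} {s : ℝ}
    (h : finalBump ℓ c' k s < finalBump ℓ c k s) : c = k.isLeft ∧ (ℓ : ℝ) ≤ s := by
  unfold finalBump at h
  split_ifs at h <;> first | linarith | assumption

lemma subsingleton_isLeft_le_sumElim {α β : Type*} {ℓ : ℕ} {u : α → ℝ} {v : β → ℝ}
    (hu : {i | (ℓ : ℝ) ≤ u i}.Subsingleton) (hv : {j | (ℓ : ℝ) ≤ v j}.Subsingleton) (c : Bool) :
    {k : α ⊕ β | c = k.isLeft ∧ (ℓ : ℝ) ≤ Sum.elim u v k}.Subsingleton := by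
  rintro (i | i) ⟨hc, hi⟩ (j | j) ⟨hc', hj⟩
  · exact congrArg _ (hu hi hj)
  · simp_all
  · simp_all
  · exact congrArg _ (hv hi hj)

def halfEquiv (ℓ : ℕ) : Fin (2 ^ ℓ) ⊕ Fin (2 ^ ℓ) ≃ Fin (2 ^ (ℓ + 1)) :=
  finSumFinEquiv.trans (finCongr (by rw [pow_succ, mul_two]))

lemma tournScore_succ_halfEquiv {ℓ : ℕ} (ω : TournOmega (ℓ + 1))
    (k : Fin (2 ^ ℓ) ⊕ Fin (2 ^ ℓ)) :
    tournScore (ℓ + 1) ω (halfEquiv ℓ k) = finalBump ℓ (finalCoin ℓ ω) k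
      (Sum.elim (tournScore ℓ (restrictHalf ℓ true ω)) (tournScore ℓ (restrictHalf ℓ false ω))
        k) := by
  rcases k with k | k
  · rw [tournScore_succ ω (h := true) (k := k) (by simp [halfEquiv, halfOffset])]
    simp only [finalBump, Sum.isLeft_inl, Sum.elim_inl, le_tournScore_iff]
    split_ifs <;> ring
  · rw [tournScore_succ ω (h := false) (k := k) (by simp [halfEquiv, halfOffset])]
    simp only [finalBump, Sum.isLeft_inr, Sum.elim_inr, le_tournScore_iff]
    split_ifs <;> ring

theorem isNegAssoc_tournScore (ℓ : ℕ) : IsNegAssoc (tournUnif ℓ) (tournScore ℓ) := by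
  induction ℓ with
  | zero =>
    have hS : tournScore 0 = fun _ _ => 0 := by funext ω i; simp [tournScore]
    rw [hS]
    exact isNegAssoc_const sum_uniformWeight _
  | succ ℓ ih =>
    have hhalves := ih.sumElim uniformWeight_nonneg uniformWeight_nonneg ih
    have hfinal := hhalves.prod_bool (q := uniformWeight Bool) (φ := finalBump ℓ)
      (fun _ => mul_nonneg (uniformWeight_nonneg _) (uniformWeight_nonneg _))
      uniformWeight_nonneg (by norm_num [uniformWeight]) (finalBump_monotone ℓ)
      (fun _ => (subsingleton_isLeft_le_sumElim (subsingleton_le_tournScore _)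
        (subsingleton_le_tournScore _) true).anti fun _ => finalBump_lt_finalBump)
      (fun _ => (subsingleton_isLeft_le_sumElim (subsingleton_le_tournScore _)
        (subsingleton_le_tournScore _) false).anti fun _ => finalBump_lt_finalBump)
    convert (hfinal.comp_injective (halfEquiv ℓ).symm.injective).comp
      (expec_tournUnif_comp_tournSplit ℓ)
    funext ω i
    simpa [tournSplit] using tournScore_succ_halfEquiv ω ((halfEquiv ℓ).symm i)

end Tournament

theorem knockout_deterministic_draw_scores_NA (ℓ : ℕ) :
    IsNAfin (tournUnif ℓ) (tournScore ℓ) :=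
  (Tournament.isNegAssoc_tournScore ℓ).isNAfin
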